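/- Let n ≥ 1 and fix i ∈ 𝔽_2^{2n}. Consider vectors λ : 𝔽_2^{2n} → ℝ with λ_b ≥ 0 for all b and Σ_{b ∈ 𝔽_2^{2n}} (−1)^{⟨a,b⟩} λ_b = −(−1)^{⟨a,i⟩} for every a ∈ 𝔽_2^{2n} \ {0}. Then (1) every such λ satisfies Σ_b λ_b ≥ 4^n − 1, and (2) the vector λ defined by λ_i = 0 and λ_j = 1 for j ≠ i satisfies the constraints and has Σ_b λ_b = 4^n − 1; hence the minimum of Σ_b λ_b over all such λ equals 4^n − 1. -/

import Mathlib

/-- Binary symplectic vectors: `𝔽_2^{2n}` presented as pairs `(a_x, a_z)` of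
vectors in `𝔽_2^n`. -/
abbrev BV (n : ℕ) := (Fin n → ZMod 2) × (Fin n → ZMod 2)

/-- The binary symplectic form `⟨a,b⟩ = a_x · b_z + a_z · b_x` (mod 2). -/
def symp {n : ℕ} (a b : BV n) : ZMod 2 :=
  (∑ i, a.1 i * b.2 i) + (∑ i, a.2 i * b.1 i)

/-- The real sign `(−1)^{⟨a,b⟩} ∈ {−1, 1} ⊆ ℝ`. -/
noncomputable def wsgn {n : ℕ} (a b : BV n) : ℝ := (-1 : ℝ) ^ (symp a b).val

lemma sgn_add (x y : ZMod 2) :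
    ((-1:ℝ)) ^ (x+y).val = (-1:ℝ)^x.val * (-1:ℝ)^y.val := by
  rw [ZMod.val_add, ← pow_add, neg_one_pow_eq_pow_mod_two (n := x.val + y.val)]

lemma symp_add_right {n} (a b c : BV n) : symp a (b + c) = symp a b + symp a c := by
  simp [symp, mul_add, Finset.sum_add_distrib]; ring

lemma symp_comm {n} (a b : BV n) : symp a b = symp b a := by
  unfold symp
  rw [add_comm]
  congr 1 <;> exact Finset.sum_congr rfl fun j _ => mul_comm _ _

lemma symp_zero_right {n} (a : BV n) : symp a 0 = 0 := by
  simp [symp]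

lemma wsgn_zero_right {n} (a : BV n) : wsgn a 0 = 1 := by
  simp [wsgn, symp_zero_right]

lemma wsgn_zero_left {n} (a : BV n) : wsgn 0 a = 1 := by
  rw [wsgn, symp_comm, symp_zero_right]; simp

lemma wsgn_add_right {n} (a b c : BV n) : wsgn a (b + c) = wsgn a b * wsgn a c := by
  rw [wsgn, symp_add_right, sgn_add]; rfl

lemma wsgn_comm {n} (a b : BV n) : wsgn a b = wsgn b a := by
  rw [wsgn, symp_comm]; rfl

lemma wsgn_sq {n} (a b : BV n) : wsgn a b * wsgn a b = 1 := by
  rw [wsgn, ← mul_pow]; norm_num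

lemma exists_symp_one {n} (a : BV n) (ha : a ≠ 0) : ∃ b : BV n, symp a b = 1 := by
  have h : a.1 ≠ 0 ∨ a.2 ≠ 0 := by
    by_contra h
    push_neg at h
    exact ha (Prod.ext h.1 h.2)
  have hone : ∀ x : ZMod 2, x ≠ 0 → x = 1 := by decide
  rcases h with h | h
  · obtain ⟨j, hj⟩ := Function.ne_iff.mp h
    refine ⟨(0, Pi.single j 1), ?_⟩
    have h1 : a.1 j = 1 := hone _ (by simpa using hj)
    simp [symp, Pi.single_apply, mul_ite, Finset.sum_ite_eq', h1]
  · obtain ⟨j, hj⟩ := Function.ne_iff.mp h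
    refine ⟨(Pi.single j 1, 0), ?_⟩
    have h1 : a.2 j = 1 := hone _ (by simpa using hj)
    simp [symp, Pi.single_apply, mul_ite, Finset.sum_ite_eq', h1]

lemma sum_wsgn {n} (a : BV n) (ha : a ≠ 0) : ∑ b : BV n, wsgn a b = 0 := by
  obtain ⟨b0, hb0⟩ := exists_symp_one a ha
  have hneg : wsgn a b0 = -1 := by rw [wsgn, hb0]; norm_num [show ((1:ZMod 2)).val = 1 from rfl]
  have h : ∑ b : BV n, wsgn a (b + b0) = ∑ b : BV n, wsgn a b :=
    Fintype.sum_equiv (Equiv.addRight b0) _ _ (fun b => rfl)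
  have h2 : ∑ b : BV n, wsgn a (b + b0) = -∑ b : BV n, wsgn a b := by
    rw [← Finset.sum_neg_distrib]
    exact Finset.sum_congr rfl fun b _ => by rw [wsgn_add_right, hneg]; ring
  linarith [h, h2]

lemma card_BV (n : ℕ) : (Fintype.card (BV n) : ℝ) = 4 ^ n := by
  have : Fintype.card (BV n) = 4 ^ n := by
    simp [Fintype.card_prod, Fintype.card_fun, ← mul_pow]
  rw [this]; push_cast; ring

lemma neg_self_BV {n} (c : BV n) : -c = c := by
  ext j <;> exact CharTwo.neg_eq _

/-- for the worst-case target `M_a = −(−1)^{⟨a,i⟩}` the minimum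
total weight over feasible `λ` is exactly `4^n − 1`: (1) every feasible `λ` has
total weight at least `4^n − 1`; (2) the explicit vector `λ_i = 0`, `λ_j = 1`
(`j ≠ i`) is feasible with total weight `4^n − 1`; hence `4^n − 1` is the
minimum of the total weight over feasible `λ`. -/
theorem stmt_10 (n : ℕ) (hn : 1 ≤ n) (i : BV n) :
    (∀ lam : BV n → ℝ, (∀ b, 0 ≤ lam b) →
        (∀ a : BV n, a ≠ 0 → ∑ b : BV n, wsgn a b * lam b = -(wsgn a i)) →
        (4 : ℝ) ^ n - 1 ≤ ∑ b : BV n, lam b) ∧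
    ((∀ b : BV n, (0 : ℝ) ≤ if b = i then 0 else 1) ∧
      (∀ a : BV n, a ≠ 0 →
        ∑ b : BV n, wsgn a b * (if b = i then (0 : ℝ) else 1) = -(wsgn a i)) ∧
      ∑ b : BV n, (if b = i then (0 : ℝ) else 1) = (4 : ℝ) ^ n - 1) ∧
    IsLeast {s : ℝ | ∃ lam : BV n → ℝ, (∀ b, 0 ≤ lam b) ∧
        (∀ a : BV n, a ≠ 0 → ∑ b : BV n, wsgn a b * lam b = -(wsgn a i)) ∧
        s = ∑ b : BV n, lam b} ((4 : ℝ) ^ n - 1) := by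
  classical
  have h4pos : (0:ℝ) < 4 ^ n := by positivity
  have hcardsum : ∑ _b : BV n, (1:ℝ) = 4 ^ n := by
    rw [Finset.sum_const, Finset.card_univ, nsmul_eq_mul, mul_one, card_BV n]
  have horth : ∀ c : BV n, ∑ a : BV n, wsgn a c = if c = 0 then (4:ℝ)^n else 0 := by
    intro c
    by_cases hc : c = 0
    · subst hc
      rw [if_pos rfl, ← hcardsum]
      exact Finset.sum_congr rfl fun a _ => wsgn_zero_right a
    · rw [if_neg hc]
      calc ∑ a : BV n, wsgn a c = ∑ a : BV n, wsgn c a :=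
            Finset.sum_congr rfl fun a _ => wsgn_comm a c
        _ = 0 := sum_wsgn c hc
  set E : Finset (BV n) := Finset.univ.erase 0 with hE
  have hcardE : (E.card : ℝ) = 4^n - 1 := by
    have h1 : 1 ≤ Fintype.card (BV n) := Fintype.card_pos
    have h2 : E.card = Fintype.card (BV n) - 1 := by
      simp [hE, Finset.card_erase_of_mem, Finset.card_univ]
    rw [h2, Nat.cast_sub h1, card_BV n, Nat.cast_one]
  have hsumE : ∀ c : BV n, ∑ a ∈ E, wsgn a c = (if c = 0 then (4:ℝ)^n else 0) - 1 := by
    intro c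
    have horthc := horth c
    have h0 : wsgn (0 : BV n) c = 1 := wsgn_zero_left c
    have hsplit : ∑ a : BV n, wsgn a c = wsgn 0 c + ∑ a ∈ E, wsgn a c := by
      rw [hE]
      exact (Finset.add_sum_erase _ _ (Finset.mem_univ 0)).symm
    rw [h0] at hsplit
    linarith
  have hiff : ∀ b : BV n, (i + b = 0) ↔ (b = i) := by
    intro b
    constructor
    · intro h
      have h2 := neg_eq_of_add_eq_zero_right h
      rw [← h2, neg_self_BV]
    · intro h
      rw [h, show i + i = i + -i from by rw [neg_self_BV], add_neg_cancel]
  have lower : ∀ lam : BV n → ℝ, (∀ b, 0 ≤ lam b) →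
      (∀ a : BV n, a ≠ 0 → ∑ b : BV n, wsgn a b * lam b = -(wsgn a i)) →
      (4:ℝ)^n - 1 ≤ ∑ b : BV n, lam b := by
    intro lam hpos hcon
    have hT1 : ∑ a ∈ E, wsgn a i * (∑ b : BV n, wsgn a b * lam b) = -((4:ℝ)^n - 1) := by
      have hterm : ∀ a ∈ E, wsgn a i * (∑ b : BV n, wsgn a b * lam b) = -1 := by
        intro a haE
        rw [hcon a (Finset.ne_of_mem_erase haE), mul_neg, wsgn_sq]
      rw [Finset.sum_congr rfl hterm, Finset.sum_const, nsmul_eq_mul, hcardE]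
      ring
    have hT2 : ∑ a ∈ E, wsgn a i * (∑ b : BV n, wsgn a b * lam b)
        = 4^n * lam i - ∑ b : BV n, lam b := by
      have step1 : ∀ a : BV n, wsgn a i * (∑ b : BV n, wsgn a b * lam b)
          = ∑ b : BV n, wsgn a (i + b) * lam b := by
        intro a
        rw [Finset.mul_sum]
        exact Finset.sum_congr rfl fun b _ => by rw [wsgn_add_right]; ring
      calc ∑ a ∈ E, wsgn a i * (∑ b : BV n, wsgn a b * lam b)
          = ∑ a ∈ E, ∑ b : BV n, wsgn a (i + b) * lam b :=
            Finset.sum_congr rfl fun a _ => step1 a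
        _ = ∑ b : BV n, ∑ a ∈ E, wsgn a (i + b) * lam b := Finset.sum_comm
        _ = ∑ b : BV n, ((if i + b = 0 then (4:ℝ)^n else 0) - 1) * lam b := by
            refine Finset.sum_congr rfl fun b _ => ?_
            rw [← Finset.sum_mul, hsumE]
        _ = 4^n * lam i - ∑ b : BV n, lam b := by
            simp only [hiff]
            simp only [sub_mul, one_mul, Finset.sum_sub_distrib, ite_mul, zero_mul,
              Finset.sum_ite_eq', Finset.mem_univ, if_true]
    have hnn : 0 ≤ (4:ℝ)^n * lam i := mul_nonneg (le_of_lt h4pos) (hpos i)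
    linarith [hT1.symm.trans hT2]
  have feas1 : ∀ b : BV n, (0 : ℝ) ≤ if b = i then 0 else 1 := by
    intro b; split <;> norm_num
  have feas2 : ∀ a : BV n, a ≠ 0 →
      ∑ b : BV n, wsgn a b * (if b = i then (0:ℝ) else 1) = -(wsgn a i) := by
    intro a ha
    have hterm : ∀ b : BV n, wsgn a b * (if b = i then (0:ℝ) else 1)
        = wsgn a b - (if b = i then wsgn a b else 0) := by
      intro b; by_cases hb : b = i <;> simp [hb]
    rw [Finset.sum_congr rfl fun b _ => hterm b, Finset.sum_sub_distrib, sum_wsgn a ha]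
    simp [Finset.sum_ite_eq']
  have feas3 : ∑ b : BV n, (if b = i then (0:ℝ) else 1) = (4:ℝ)^n - 1 := by
    have hterm : ∀ b : BV n, (if b = i then (0:ℝ) else 1)
        = 1 - (if b = i then (1:ℝ) else 0) := by
      intro b; by_cases hb : b = i <;> simp [hb]
    rw [Finset.sum_congr rfl fun b _ => hterm b, Finset.sum_sub_distrib, hcardsum]
    simp [Finset.sum_ite_eq']
  refine ⟨lower, ⟨feas1, feas2, feas3⟩, ⟨⟨fun b => if b = i then 0 else 1,
    feas1, feas2, feas3.symm⟩, ?_⟩⟩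
  rintro s ⟨lam, h1, h2, rfl⟩
  exact lower lam h1 h2
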